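/- arXiv:2010.01234 — 2 statements merged into one kernel-verified Lean document; each statement's English description precedes it below -/
import Mathlib

section
/- The Laplace mechanism preserves ε-differential privacy: let f be a function from finite datasets of points in ℝ^d to ℝ^m with L1 sensitivity Δf = sup over neighboring datasets D, D′ of ‖f(D) − f(D′)‖₁, and let M(D) = f(D) + (Y₁, …, Y_m) where Y₁, …, Y_m are i.i.d. random variables drawn from Lap(Δf/ε). Then for all neighboring datasets D, D′ and all measurable sets S ⊆ ℝ^m, Pr[M(D) ∈ S] ≤ e^ε · Pr[M(D′) ∈ S]. -/
open MeasureTheory Real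
open scoped ENNReal

/-- Two finite datasets of points in `ℝ^d` are neighboring if one is obtained from the
other by adding or removing a single element. -/
def Neighbor {d : ℕ} (D D' : Finset (Fin d → ℝ)) : Prop :=
  (∃ x ∉ D, D' = insert x D) ∨ (∃ x ∉ D', D = insert x D')

/-- A randomized mechanism `M` (given by its output distributions) satisfies
`ε`-differential privacy if for all neighboring datasets `D, D'` and all measurable
sets `S`, `Pr[M(D) ∈ S] ≤ e^ε · Pr[M(D') ∈ S]`. -/
def IsDP {d : ℕ} {Ω : Type*} [MeasurableSpace Ω]
    (M : Finset (Fin d → ℝ) → Measure Ω) (ε : ℝ) : Prop :=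
  ∀ D D' : Finset (Fin d → ℝ), Neighbor D D' →
    ∀ S : Set Ω, MeasurableSet S →
      M D S ≤ ENNReal.ofReal (Real.exp ε) * M D' S

/-- The Laplace distribution `Lap(b)`: the measure on `ℝ` with density
`(1/(2b))·exp(−|x|/b)` with respect to Lebesgue measure. -/
noncomputable def laplace (b : ℝ) : Measure ℝ :=
  volume.withDensity fun x => ENNReal.ofReal (1 / (2 * b) * Real.exp (-|x| / b))

/-- The Laplace mechanism: `M(D) = f(D) + (Y₁, …, Y_m)` where the `Yᵢ` are i.i.d.
draws from `Lap(b)`. -/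
noncomputable def laplaceMechanism {d m : ℕ} (f : Finset (Fin d → ℝ) → (Fin m → ℝ))
    (b : ℝ) (D : Finset (Fin d → ℝ)) : Measure (Fin m → ℝ) :=
  (Measure.pi fun _ : Fin m => laplace b).map fun y => f D + y

instance (b : ℝ) : SigmaFinite (laplace b) :=
  SigmaFinite.withDensity_ofReal _

lemma lapl_meas (b : ℝ) :
    Measurable fun x : ℝ => ENNReal.ofReal (1 / (2 * b) * Real.exp (-|x| / b)) := by
  fun_prop

lemma lintegral_pi_prod {n : ℕ} (h : Fin n → ℝ → ℝ≥0∞) (hh : ∀ i, Measurable (h i)) :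
    ∫⁻ x : Fin n → ℝ, ∏ i, h i (x i) ∂(Measure.pi fun _ => (volume : Measure ℝ)) =
      ∏ i, ∫⁻ x, h i x := by
  induction n with
  | zero => simp [Measure.pi_empty_univ]
  | succ n ih =>
    rw [← ((measurePreserving_piFinSuccAbove (fun _ : Fin (n+1) => (volume : Measure ℝ))
      0).symm).lintegral_comp_emb (MeasurableEquiv.measurableEmbedding _)]
    have key : ∀ a : ℝ × (Fin n → ℝ),
        ∏ i : Fin (n + 1), h i ((MeasurableEquiv.piFinSuccAbove (fun _ => ℝ) 0).symm a i)
          = h 0 a.1 * ∏ j : Fin n, h j.succ (a.2 j) := by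
      intro a
      have e0 : ((MeasurableEquiv.piFinSuccAbove (fun _ => ℝ) 0).symm a)
          = Fin.cons a.1 a.2 := by
        funext i
        simp [MeasurableEquiv.piFinSuccAbove_symm_apply, Fin.insertNthEquiv,
          Fin.insertNth_zero]
      rw [e0, Fin.prod_univ_succ]
      simp
    simp_rw [key]
    have hgr : Measurable fun y : Fin n → ℝ => ∏ j : Fin n, h j.succ (y j) :=
      Finset.measurable_prod Finset.univ fun (j : Fin n) _ =>
        (hh j.succ).comp (measurable_pi_apply j)
    rw [lintegral_prod_mul (hh 0).aemeasurable hgr.aemeasurable,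
      ih (fun j => h j.succ) (fun j => hh j.succ), Fin.prod_univ_succ]

lemma laplace_pi_eq (b : ℝ) (m : ℕ) :
    Measure.pi (fun _ : Fin m => laplace b) =
      (Measure.pi fun _ : Fin m => (volume : Measure ℝ)).withDensity
        (fun x => ∏ i, ENNReal.ofReal (1 / (2 * b) * Real.exp (-|x i| / b))) := by
  set g : ℝ → ℝ≥0∞ := fun t => ENNReal.ofReal (1 / (2 * b) * Real.exp (-|t| / b)) with hg
  refine Measure.pi_eq fun s hs => ?_
  rw [withDensity_apply _ (MeasurableSet.univ_pi hs),
    ← lintegral_indicator (MeasurableSet.univ_pi hs) _]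
  have hind : (Set.univ.pi s).indicator (fun x : Fin m → ℝ => ∏ i, g (x i)) =
      fun x => ∏ i, (s i).indicator g (x i) := by
    funext x
    by_cases hx : x ∈ Set.univ.pi s
    · rw [Set.indicator_of_mem hx]
      exact Finset.prod_congr rfl fun i _ =>
        (Set.indicator_of_mem (hx i (Set.mem_univ i)) g).symm
    · rw [Set.indicator_of_notMem hx]
      rw [Set.mem_univ_pi] at hx
      push_neg at hx
      obtain ⟨i, hi⟩ := hx
      exact (Finset.prod_eq_zero (Finset.mem_univ i)
        (Set.indicator_of_notMem hi g)).symm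
  rw [hind, lintegral_pi_prod _ fun i => (lapl_meas b).indicator (hs i)]
  refine Finset.prod_congr rfl fun i _ => ?_
  rw [lintegral_indicator (hs i) _]
  exact (withDensity_apply _ (hs i)).symm

/-- The Laplace mechanism preserves `ε`-differential privacy: if `f` has
L1 sensitivity at most `Δf` over neighboring datasets, then
`M(D) = f(D) + (Y₁, …, Y_m)` with `Yᵢ` i.i.d. `Lap(Δf/ε)` is `ε`-DP. -/
theorem laplaceMechanism_isDP {d m : ℕ} (f : Finset (Fin d → ℝ) → (Fin m → ℝ))
    (Δf ε : ℝ) (hΔ : 0 < Δf) (hε : 0 < ε)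
    (hsens : ∀ D D' : Finset (Fin d → ℝ), Neighbor D D' →
      ∑ i, |f D i - f D' i| ≤ Δf) :
    IsDP (laplaceMechanism f (Δf / ε)) ε := by
  intro D D' hN S hS
  set b := Δf / ε with hb_def
  have hb : 0 < b := div_pos hΔ hε
  set g : ℝ → ℝ≥0∞ := fun t => ENNReal.ofReal (1 / (2 * b) * Real.exp (-|t| / b)) with hg_def
  set G : (Fin m → ℝ) → ℝ≥0∞ := fun x => ∏ i, g (x i) with hG_def
  have hG : Measurable G :=
    Finset.measurable_prod Finset.univ fun i _ => (lapl_meas b).comp (measurable_pi_apply i)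
  set c : Fin m → ℝ := f D - f D' with hc_def
  have hmeas_add : ∀ v : Fin m → ℝ, Measurable fun y : Fin m → ℝ => v + y :=
    fun v => measurable_const.add measurable_id
  have hmeas_addc : Measurable fun y : Fin m → ℝ => y + c :=
    measurable_id.add measurable_const
  simp only [laplaceMechanism]
  rw [Measure.map_apply (hmeas_add _) hS, Measure.map_apply (hmeas_add _) hS]
  set A : Set (Fin m → ℝ) := (fun y => f D' + y) ⁻¹' S with hA_def
  have hA : MeasurableSet A := (hmeas_add _) hS
  have hpre : (fun y => f D + y) ⁻¹' S = (fun y => y + c) ⁻¹' A := by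
    have hyc : ∀ y : Fin m → ℝ, f D' + (y + c) = f D + y := by
      intro y; rw [hc_def]; ring
    ext y
    simp only [Set.mem_preimage, hA_def, hyc y]
  rw [hpre, laplace_pi_eq b m, withDensity_apply _ (hmeas_addc hA), withDensity_apply _ hA]
  have hπ : (Measure.pi fun _ : Fin m => (volume : Measure ℝ)) = volume := volume_pi.symm
  have hmp : MeasurePreserving (fun y : Fin m → ℝ => y + c)
      (Measure.pi fun _ : Fin m => (volume : Measure ℝ))
      (Measure.pi fun _ : Fin m => (volume : Measure ℝ)) :=
    ⟨hmeas_addc, by rw [hπ]; exact map_add_right_eq_self volume c⟩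
  have hG' : Measurable fun z : Fin m → ℝ => G (z - c) :=
    hG.comp (measurable_id.sub measurable_const)
  have hsub := hmp.setLIntegral_comp_preimage hA hG'
  simp only [add_sub_cancel_right] at hsub
  rw [show (∫⁻ x in (fun y : Fin m → ℝ => y + c) ⁻¹' A, G x
        ∂(Measure.pi fun _ : Fin m => (volume : Measure ℝ)))
      = ∫⁻ z in A, G (z - c) ∂(Measure.pi fun _ : Fin m => (volume : Measure ℝ)) from hsub]
  have key : ∀ z : Fin m → ℝ, G (z - c) ≤ ENNReal.ofReal (Real.exp ε) * G z := by
    intro z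
    have hk : (0:ℝ) ≤ 1 / (2 * b) := by positivity
    have hfac : ∀ (t : ℝ), (0:ℝ) ≤ 1 / (2 * b) * Real.exp (-|t| / b) := fun t => by positivity
    have hS1 : (∑ i, -|z i - c i| / b) ≤ ε + ∑ i, -|z i| / b := by
      have hcb : (∑ i, |c i|) / b ≤ ε := by
        rw [div_le_iff₀ hb]
        have hbε : ε * b = Δf := by rw [hb_def]; field_simp
        rw [hbε]
        simpa [hc_def] using hsens D D' hN
      have h2 : ∀ i ∈ Finset.univ, -|z i - c i| / b ≤ (|c i| - |z i|) / b := by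
        intro i _
        have h4 := abs_sub_abs_le_abs_sub (z i) (z i - c i)
        have h5 : z i - (z i - c i) = c i := by ring
        rw [h5] at h4
        gcongr
        linarith
      calc (∑ i, -|z i - c i| / b) ≤ ∑ i, (|c i| - |z i|) / b := Finset.sum_le_sum h2
        _ = (∑ i, |c i|) / b + ∑ i, -|z i| / b := by
            simp only [sub_div, neg_div, Finset.sum_sub_distrib,
              Finset.sum_neg_distrib, Finset.sum_div, sub_eq_add_neg,
              add_div, Finset.sum_add_distrib]
        _ ≤ ε + ∑ i, -|z i| / b := by linarith
    have hreal : (∏ i, (1 / (2 * b) * Real.exp (-|z i - c i| / b)))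
        ≤ Real.exp ε * ∏ i, (1 / (2 * b) * Real.exp (-|z i| / b)) := by
      calc (∏ i, (1 / (2 * b) * Real.exp (-|z i - c i| / b)))
          = (∏ _i : Fin m, 1 / (2 * b)) * Real.exp (∑ i, -|z i - c i| / b) := by
            rw [Finset.prod_mul_distrib, Real.exp_sum]
        _ ≤ (∏ _i : Fin m, 1 / (2 * b)) * Real.exp (ε + ∑ i, -|z i| / b) := by
            apply mul_le_mul_of_nonneg_left (Real.exp_le_exp.mpr hS1)
            exact Finset.prod_nonneg fun i _ => hk
        _ = Real.exp ε * ∏ i, (1 / (2 * b) * Real.exp (-|z i| / b)) := by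
            rw [Real.exp_add, Finset.prod_mul_distrib, Real.exp_sum]; ring
    have hGzc : G (z - c) = ENNReal.ofReal (∏ i, (1 / (2 * b) * Real.exp (-|z i - c i| / b))) := by
      rw [hG_def, hg_def, ENNReal.ofReal_prod_of_nonneg fun i _ => hfac _]
      simp [Pi.sub_apply]
    have hGz : G z = ENNReal.ofReal (∏ i, (1 / (2 * b) * Real.exp (-|z i| / b))) := by
      rw [hG_def, hg_def, ENNReal.ofReal_prod_of_nonneg fun i _ => hfac _]
    rw [hGzc, hGz, ← ENNReal.ofReal_mul (Real.exp_nonneg ε)]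
    exact ENNReal.ofReal_le_ofReal hreal
  calc (∫⁻ z in A, G (z - c) ∂(Measure.pi fun _ : Fin m => (volume : Measure ℝ)))
      ≤ ∫⁻ z in A, ENNReal.ofReal (Real.exp ε) * G z
        ∂(Measure.pi fun _ : Fin m => (volume : Measure ℝ)) := lintegral_mono fun z => key z
    _ = ENNReal.ofReal (Real.exp ε) * ∫⁻ z in A, G z
        ∂(Measure.pi fun _ : Fin m => (volume : Measure ℝ)) :=
      lintegral_const_mul' _ _ ENNReal.ofReal_ne_top
end

section
/- Theorem 1 (differential privacy of DP-KCCM): let ε₁, …, ε_T > 0 with ε = ε₁ + ⋯ + ε_T, let r > 0 and Δ = d·r + 1. Consider the adaptive mechanism that, on a finite dataset D of points in [−r, r]^d, performs T iterations, where in iteration t a measurable assignment function g_t : ℝ^d → {1, …, K} is chosen as a measurable function of the outputs of iterations 1, …, t−1 only, and the iteration outputs, for each cluster index j, the noisy per-cluster sum ∑_{x∈D, g_t(x)=j} x + i.i.d. Lap(Δ/ε_t) noise per coordinate and the noisy per-cluster count |{x∈D : g_t(x)=j}| + Lap(Δ/ε_t) noise; finally a deterministic measurable post-processing map (the cluster-merging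 step, which uses only the noisy centroids and noisy counts) is applied to the collected outputs. This composed mechanism satisfies ε-differential privacy. -/
open MeasureTheory Real

/-- The (noiseless) per-iteration query of DP-KCCM: for each cluster index `j` it
returns the `d` coordinates of the cluster sum `∑_{x ∈ D, g x = j} x` together with
the cluster count `|{x ∈ D : g x = j}|`. -/
noncomputable def iterQuery {d K : ℕ} (g : (Fin d → ℝ) → Fin K)
    (D : Finset (Fin d → ℝ)) : Fin K × Fin (d + 1) → ℝ :=
  fun p =>
    if h : (p.2 : ℕ) < d then ∑ x ∈ D.filter fun y => g y = p.1, x ⟨p.2, h⟩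
    else ((D.filter fun y => g y = p.1).card : ℝ)

/-- One iteration of DP-KCCM: output, for each cluster `j`, the noisy sum and noisy
count, all noise variables across coordinates and clusters i.i.d. `Lap(b)`. -/
noncomputable def noisyIteration {d K : ℕ} (g : (Fin d → ℝ) → Fin K) (b : ℝ)
    (D : Finset (Fin d → ℝ)) : Measure (Fin K × Fin (d + 1) → ℝ) :=
  (Measure.pi fun _ : Fin K × Fin (d + 1) => laplace b).map fun y => iterQuery g D + y

/-- The adaptive composition of `T` DP-KCCM iterations on dataset `D`: in iteration
`t`, the assignment function `g t h` may depend on the history `h` of outputs of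
iterations `1, …, t−1`, and the iteration adds i.i.d. `Lap(b t)` noise to the
per-cluster sums and counts; the mechanism collects all `T` iteration outputs. -/
noncomputable def adaptiveMech (d K : ℕ)
    (g : (t : ℕ) → (Fin t → (Fin K × Fin (d + 1) → ℝ)) → (Fin d → ℝ) → Fin K)
    (b : ℕ → ℝ) (D : Finset (Fin d → ℝ)) :
    (T : ℕ) → Measure (Fin T → (Fin K × Fin (d + 1) → ℝ))
  | 0 => Measure.dirac fun i => i.elim0
  | T + 1 => (adaptiveMech d K g b D T).bind fun h =>
      (noisyIteration (g T h) (b T) D).map (Fin.snoc h)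

open scoped ENNReal NNReal

/-!
Whatever the assignment function `g`, adding or removing one point `x` of `[-r, r]^d` changes the
per-cluster sums and counts only in the cluster `g x`, by the vector `(x, 1)`: the released query has
ℓ¹-sensitivity at most `Δ = d·r + 1`. Since the Laplace density satisfies
`p(u) ≤ exp(|u - v| / b) · p(v)`, adding i.i.d. `Lap(b)` noise to a query of sensitivity `Δ`
changes the output law by a factor at most `exp(Δ / b)`, which is `exp ε_t` for `b = Δ / ε_t`.
The adaptive composition is an iterated bind of kernels, and such factors multiply through a bind;
post-processing preserves inequalities between measures.
-/

namespace MeasureTheory.Measure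

theorem map_const_add_withDensity {G : Type*} [MeasurableSpace G] [AddGroup G] [MeasurableAdd G]
    (μ : Measure G) [μ.IsAddLeftInvariant] {f : G → ℝ≥0∞} (hf : Measurable f) (c : G) :
    (μ.withDensity f).map (c + ·) = μ.withDensity fun x => f (-c + x) := by
  ext s hs
  rw [map_apply (measurable_const_add c) hs, withDensity_apply _ (measurable_const_add c hs),
    withDensity_apply _ hs, ← (measurePreserving_add_left μ c).setLIntegral_comp_preimage hs
      (f := fun x => f (-c + x)) (hf.comp (measurable_const_add (-c)))]
  simp only [neg_add_cancel_left]

theorem pi_mono {ι : Type*} [Fintype ι] {α : ι → Type*} [∀ i, MeasurableSpace (α i)]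
    {μ ν : ∀ i, Measure (α i)} (h : ∀ i, μ i ≤ ν i) : Measure.pi μ ≤ Measure.pi ν := by
  refine le_iff.2 fun s hs => ?_
  simp only [pi_def, toMeasure_apply _ _ hs]
  refine OuterMeasure.le_pi.2 (fun t _ => (OuterMeasure.pi_pi_le _ t).trans ?_) s
  exact Finset.prod_le_prod' fun i _ => h i (t i)

theorem pi_smul {ι : Type*} [Fintype ι] {α : ι → Type*} [∀ i, MeasurableSpace (α i)]
    (c : ι → ℝ≥0) (μ : ∀ i, Measure (α i)) [∀ i, SigmaFinite (μ i)] :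
    Measure.pi (fun i => c i • μ i) = (∏ i, c i) • Measure.pi μ := by
  refine pi_eq fun s hs => ?_
  simp only [smul_apply, pi_pi, ENNReal.smul_def, smul_eq_mul,
    ENNReal.ofNNReal_finsetProd, Finset.prod_mul_distrib]

theorem bind_le_smul_bind {α β : Type*} [MeasurableSpace α] [MeasurableSpace β] {μ ν : Measure α} {κ η : α → Measure β} {c c' : ℝ≥0∞}
    (hκ : Measurable κ) (hη : Measurable η) (hμν : μ ≤ c • ν) (hκη : ∀ a, κ a ≤ c' • η a) :
    μ.bind κ ≤ (c * c') • ν.bind η := by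
  refine le_iff.2 fun s hs => ?_
  rw [bind_apply hs hκ.aemeasurable, smul_apply, bind_apply hs hη.aemeasurable, smul_eq_mul]
  calc ∫⁻ a, κ a s ∂μ ≤ ∫⁻ a, c' * η a s ∂μ := lintegral_mono fun a => hκη a s
    _ = c' * ∫⁻ a, η a s ∂μ := lintegral_const_mul c' ((measurable_coe hs).comp hη)
    _ ≤ c' * ∫⁻ a, η a s ∂(c • ν) := by gcongr
    _ = c * c' * ∫⁻ a, η a s ∂ν := by rw [lintegral_smul_measure]; ring

end MeasureTheory.Measure

theorem measurable_snoc {n : ℕ} {α : Fin (n + 1) → Type*} [∀ i, MeasurableSpace (α i)] :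
    Measurable fun z : (∀ i : Fin n, α i.castSucc) × α (Fin.last n) => Fin.snoc z.1 z.2 := by
  refine measurable_pi_iff.2 fun j => Fin.lastCases ?_ (fun i => ?_) j
  · simpa using measurable_snd
  · simpa [Function.comp_def] using (measurable_pi_apply i).comp measurable_fst

instance inst_s9 (b : ℝ) : SigmaFinite (laplace b) := by
  unfold laplace; infer_instance

theorem laplace_map_const_add (b c : ℝ) :
    (laplace b).map (c + ·) =
      volume.withDensity fun x => ENNReal.ofReal (1 / (2 * b) * exp (-|-c + x| / b)) :=
  Measure.map_const_add_withDensity volume (by fun_prop) c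

theorem laplace_map_const_add_le {b : ℝ} (hb : 0 < b) (q q' : ℝ) :
    (laplace b).map (q + ·) ≤ (exp (|q - q'| / b)).toNNReal • (laplace b).map (q' + ·) := by
  rw [laplace_map_const_add, laplace_map_const_add, ENNReal.smul_def,
    ← withDensity_smul' _ _ ENNReal.coe_ne_top]
  refine withDensity_mono (.of_forall fun x => ?_)
  simp only [Pi.smul_apply, smul_eq_mul, ENNReal.ofNNReal_toNNReal]
  rw [← ENNReal.ofReal_mul (exp_nonneg _)]
  refine ENNReal.ofReal_le_ofReal ?_
  have htri := abs_add_le (-q + x) (q - q')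
  rw [show -q + x + (q - q') = -q' + x by ring] at htri
  rw [mul_left_comm, ← exp_add]
  gcongr
  rw [← add_div, div_le_div_iff_of_pos_right hb]
  linarith

theorem pi_laplace_map_add_le {ι : Type*} [Fintype ι] {b : ℝ} (hb : 0 < b) (q q' : ι → ℝ) :
    (Measure.pi fun _ : ι => laplace b).map (q + ·) ≤
      ENNReal.ofReal (exp ((∑ i, |q i - q' i|) / b)) •
        (Measure.pi fun _ : ι => laplace b).map (q' + ·) := by
  have (c : ℝ) : SigmaFinite ((laplace b).map (c + ·)) := by
    rw [laplace_map_const_add]; infer_instance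
  have hmap (p : ι → ℝ) : (Measure.pi fun _ : ι => laplace b).map (p + ·) =
      Measure.pi fun i => (laplace b).map (p i + ·) :=
    Measure.pi_map_pi fun i => (measurable_const_add (p i)).aemeasurable
  rw [hmap, hmap]
  calc _ ≤ Measure.pi fun i => (exp (|q i - q' i| / b)).toNNReal • (laplace b).map (q' i + ·) :=
        Measure.pi_mono fun i => laplace_map_const_add_le hb (q i) (q' i)
    _ = _ := by
        rw [Measure.pi_smul, ENNReal.smul_def,
          ← Real.toNNReal_prod_of_nonneg fun i _ => exp_nonneg _, ← exp_sum, ← Finset.sum_div]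
        rfl

theorem iterQuery_singleton_apply {d K : ℕ} (g : (Fin d → ℝ) → Fin K) (x : Fin d → ℝ)
    (p : Fin K × Fin (d + 1)) :
    iterQuery g {x} p = if g x = p.1 then (Fin.snoc x 1 : Fin (d + 1) → ℝ) p.2 else 0 := by
  by_cases h : (p.2 : ℕ) < d <;> by_cases hx : g x = p.1 <;> 
    simp [iterQuery, Fin.snoc, Fin.castLT, Finset.filter_singleton, h, hx]

theorem iterQuery_eq_sum {d K : ℕ} (g : (Fin d → ℝ) → Fin K) (D : Finset (Fin d → ℝ)) :
    iterQuery g D = ∑ x ∈ D, iterQuery g {x} := by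
  funext p
  simp only [Finset.sum_apply, iterQuery_singleton_apply, ← Finset.sum_filter]
  by_cases h : (p.2 : ℕ) < d <;> simp [iterQuery, Fin.snoc, Fin.castLT, h]

theorem sum_abs_iterQuery_singleton {d K : ℕ} (g : (Fin d → ℝ) → Fin K) (x : Fin d → ℝ) :
    ∑ p, |iterQuery g {x} p| = ∑ i, |x i| + 1 := by
  simp only [iterQuery_singleton_apply, apply_ite, abs_zero, Fintype.sum_prod_type,
    Finset.sum_ite_irrel, Finset.sum_const_zero, Finset.sum_ite_eq, Finset.mem_univ, if_true,
    Fin.sum_univ_castSucc, Fin.snoc_castSucc, Fin.snoc_last, abs_one]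

theorem sum_abs_iterQuery_insert_sub_le {d K : ℕ} (g : (Fin d → ℝ) → Fin K)
    {D : Finset (Fin d → ℝ)} {x : Fin d → ℝ} (hx : x ∉ D) {r : ℝ} (hxr : ∀ i, |x i| ≤ r) :
    ∑ p, |iterQuery g (insert x D) p - iterQuery g D p| ≤ d * r + 1 := by
  rw [iterQuery_eq_sum g (insert x D), Finset.sum_insert hx, ← iterQuery_eq_sum]
  simp only [Pi.add_apply, add_sub_cancel_right, sum_abs_iterQuery_singleton]
  have := Finset.sum_le_card_nsmul Finset.univ (fun i => |x i|) r fun i _ => hxr i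
  simp only [Finset.card_univ, Fintype.card_fin, nsmul_eq_mul] at this
  linarith

theorem Neighbor.sum_abs_iterQuery_sub_le {d K : ℕ} {D D' : Finset (Fin d → ℝ)}
    (hN : Neighbor D D') {r : ℝ} (hD : ∀ x ∈ D, ∀ i, |x i| ≤ r)
    (hD' : ∀ x ∈ D', ∀ i, |x i| ≤ r) (g : (Fin d → ℝ) → Fin K) :
    ∑ p, |iterQuery g D p - iterQuery g D' p| ≤ d * r + 1 := by
  rcases hN with ⟨x, hx, rfl⟩ | ⟨x, hx, rfl⟩
  · simp_rw [abs_sub_comm (iterQuery g D _)]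
    exact sum_abs_iterQuery_insert_sub_le g hx (hD' x (Finset.mem_insert_self x D))
  · exact sum_abs_iterQuery_insert_sub_le g hx (hD x (Finset.mem_insert_self x D'))

theorem measurable_iterQuery {d K : ℕ} {H : Type*} [MeasurableSpace H]
    {G : H → (Fin d → ℝ) → Fin K} (hG : Measurable G) (D : Finset (Fin d → ℝ)) :
    Measurable fun h => iterQuery (G h) D := by
  simp_rw [iterQuery_eq_sum (G _) D]
  refine Finset.measurable_sum _ fun x _ => measurable_pi_iff.2 fun p => ?_
  simp_rw [iterQuery_singleton_apply]
  exact Measurable.ite ((measurable_pi_apply x).comp hG (measurableSet_singleton p.1))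
    measurable_const measurable_const

theorem measurable_noisyIteration_map_snoc {d K T : ℕ}
    {G : (Fin T → Fin K × Fin (d + 1) → ℝ) → (Fin d → ℝ) → Fin K} (hG : Measurable G) (b : ℝ)
    (D : Finset (Fin d → ℝ)) :
    Measurable fun h => (noisyIteration (G h) b D).map
      (Fin.snoc (α := fun _ => Fin K × Fin (d + 1) → ℝ) h) := by
  have hF : Measurable fun z : (Fin T → Fin K × Fin (d + 1) → ℝ) × (Fin K × Fin (d + 1) → ℝ) =>
      (Fin.snoc z.1 (iterQuery (G z.1) D + z.2) : Fin (T + 1) → Fin K × Fin (d + 1) → ℝ) :=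
    measurable_snoc.comp (measurable_fst.prodMk
      (((measurable_iterQuery hG D).comp measurable_fst).add measurable_snd))
  have hmap : (fun h => (noisyIteration (G h) b D).map
      (Fin.snoc (α := fun _ => Fin K × Fin (d + 1) → ℝ) h)) = fun h =>
      ((Measure.pi fun _ => laplace b).map (Prod.mk h)).map
        (fun z => (Fin.snoc z.1 (iterQuery (G z.1) D + z.2) : Fin (T + 1) → _)) := by
    funext h
    have hsnoc : Measurable (Fin.snoc (α := fun _ => Fin K × Fin (d + 1) → ℝ) h) :=
      measurable_snoc.comp measurable_prodMk_left
    rw [noisyIteration, Measure.map_map hsnoc (measurable_const_add _),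
      Measure.map_map hF measurable_prodMk_left]
    rfl
  rw [hmap]
  exact (Measure.measurable_map _ hF).comp Measurable.map_prodMk_left

theorem noisyIteration_le_smul {d K : ℕ} (g : (Fin d → ℝ) → Fin K) {b Δ : ℝ} (hb : 0 < b)
    {D D' : Finset (Fin d → ℝ)} (hsens : ∑ p, |iterQuery g D p - iterQuery g D' p| ≤ Δ) :
    noisyIteration g b D ≤ ENNReal.ofReal (exp (Δ / b)) • noisyIteration g b D' := by
  rw [noisyIteration, noisyIteration]
  refine (pi_laplace_map_add_le hb (iterQuery g D) (iterQuery g D')).trans fun s => ?_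
  simp only [Measure.smul_apply, smul_eq_mul]
  gcongr

theorem adaptiveMech_le_smul {d K : ℕ}
    {g : (t : ℕ) → (Fin t → (Fin K × Fin (d + 1) → ℝ)) → (Fin d → ℝ) → Fin K}
    (hg : ∀ t, Measurable (g t)) {b : ℕ → ℝ} {Δ : ℝ} {D D' : Finset (Fin d → ℝ)}
    (hsens : ∀ g' : (Fin d → ℝ) → Fin K, ∑ p, |iterQuery g' D p - iterQuery g' D' p| ≤ Δ) :
    ∀ T, (∀ t < T, 0 < b t) →
      adaptiveMech d K g b D T ≤
        ENNReal.ofReal (exp (∑ t ∈ Finset.range T, Δ / b t)) • adaptiveMech d K g b D' T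
  | 0, _ => by simp [adaptiveMech]
  | T + 1, hb => by
    rw [Finset.sum_range_succ, exp_add, ENNReal.ofReal_mul (exp_nonneg _)]
    refine Measure.bind_le_smul_bind (measurable_noisyIteration_map_snoc (hg T) _ D)
      (measurable_noisyIteration_map_snoc (hg T) _ D')
      (adaptiveMech_le_smul hg hsens T fun t ht => hb t (ht.trans T.lt_succ_self)) fun h => ?_
    have hsnoc : Measurable (Fin.snoc (α := fun _ => Fin K × Fin (d + 1) → ℝ) h) :=
      measurable_snoc.comp measurable_prodMk_left
    exact (Measure.map_mono (noisyIteration_le_smul _ (hb T T.lt_succ_self) (hsens _))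
      hsnoc).trans_eq (Measure.map_smul _ _ _)

/-- Theorem 1, differential privacy of DP-KCCM: let `ε₁, …, ε_T > 0`
with `ε = ε₁ + ⋯ + ε_T`, `r > 0` and `Δ = d·r + 1`. The adaptive mechanism that runs
`T` DP-KCCM iterations — iteration `t` using an assignment function `g t` chosen
measurably from the previous outputs only, and adding i.i.d. `Lap(Δ/ε_t)` noise to
each per-cluster sum coordinate and count — followed by a deterministic measurable
post-processing map (the cluster-merging step, which uses only the noisy centroids
and noisy counts), satisfies `ε`-differential privacy on datasets of points in
`[−r, r]^d`. -/
theorem dpkccm_isDP {d K : ℕ} (T : ℕ) (ε : ℕ → ℝ) (hε : ∀ t < T, 0 < ε t)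
    (r : ℝ) (hr : 0 < r)
    (g : (t : ℕ) → (Fin t → (Fin K × Fin (d + 1) → ℝ)) → (Fin d → ℝ) → Fin K)
    (hg : ∀ t, Measurable (g t))
    {Out : Type*} [MeasurableSpace Out]
    (post : (Fin T → (Fin K × Fin (d + 1) → ℝ)) → Out)
    (hpost : Measurable post) :
    ∀ D D' : Finset (Fin d → ℝ), Neighbor D D' →
      (∀ x ∈ D, ∀ i, |x i| ≤ r) → (∀ x ∈ D', ∀ i, |x i| ≤ r) →
      ∀ S : Set Out, MeasurableSet S →
        (adaptiveMech d K g (fun t => (d * r + 1) / ε t) D T).map post S ≤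
          ENNReal.ofReal (Real.exp (∑ t ∈ Finset.range T, ε t)) *
            (adaptiveMech d K g (fun t => (d * r + 1) / ε t) D' T).map post S := by
  intro D D' hN hD hD' S hS
  have hΔ : 0 < (d * r + 1 : ℝ) := by positivity
  have hmech := adaptiveMech_le_smul hg (hN.sum_abs_iterQuery_sub_le hD hD') T
    fun t ht => div_pos hΔ (hε t ht)
  simp only [div_div_cancel₀ hΔ.ne'] at hmech
  rw [Measure.map_apply hpost hS, Measure.map_apply hpost hS]
  exact hmech (post ⁻¹' S)
end
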